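/- Let Δx, Δy, Δt > 0 and define Gf : ℝ × ℝ → ℝ by Gf(q,r) = 1 − 2(Δt/Δx²)(1 − cos(qΔx)) − 2(Δt/Δy²)(1 − cos(rΔy)). Then |Gf(q,r)| ≤ 1 holds for all (q,r) ∈ ℝ × ℝ if and only if Δt/Δx² + Δt/Δy² ≤ 1/2. -/

import Mathlib

/-!
The growth factor is `1 - 2a(1 - cos θ) - 2b(1 - cos φ)` with `a = Δt/Δx²`, `b = Δt/Δy²` and
`1 - cos ∈ [0, 2]`, so it ranges over `[1 - 4(a + b), 1]`. The lower end is attained by the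
checkerboard mode `(π/Δx, π/Δy)`, hence stability is exactly `1 - 4(a + b) ≥ -1`.
-/

open Real Set

lemma one_sub_cos_mem_Icc (θ : ℝ) : 1 - cos θ ∈ Icc (0 : ℝ) 2 :=
  ⟨by linarith [cos_le_one θ], by linarith [neg_one_le_cos θ]⟩

lemma abs_one_sub_two_mul_sub_two_mul_le_one {a b u v : ℝ} (ha : 0 ≤ a) (hb : 0 ≤ b)
    (hab : a + b ≤ 1 / 2) (hu : u ∈ Icc (0 : ℝ) 2) (hv : v ∈ Icc (0 : ℝ) 2) :
    |1 - 2 * a * u - 2 * b * v| ≤ 1 := by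
  obtain ⟨hu₀, hu₂⟩ := hu
  obtain ⟨hv₀, hv₂⟩ := hv
  have hau := mul_le_mul_of_nonneg_left hu₂ ha
  have hbv := mul_le_mul_of_nonneg_left hv₂ hb
  rw [abs_le]
  constructor <;> linarith [mul_nonneg ha hu₀, mul_nonneg hb hv₀]

/-- `|Gf(q,r)| ≤ 1` for all `(q,r)` if and only if
`Δt/Δx² + Δt/Δy² ≤ 1/2`. -/
theorem von_neumann_stability_iff
    (Δx Δy Δt : ℝ) (hx : 0 < Δx) (hy : 0 < Δy) (ht : 0 < Δt)
    (Gf : ℝ × ℝ → ℝ)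
    (hGf : ∀ p : ℝ × ℝ,
      Gf p = 1 - 2 * (Δt / Δx ^ 2) * (1 - Real.cos (p.1 * Δx))
               - 2 * (Δt / Δy ^ 2) * (1 - Real.cos (p.2 * Δy))) :
    (∀ p : ℝ × ℝ, |Gf p| ≤ 1) ↔ Δt / Δx ^ 2 + Δt / Δy ^ 2 ≤ 1 / 2 := by
  constructor
  · intro hstable
    have hcheckerboard := hstable (π / Δx, π / Δy)
    rw [hGf, div_mul_cancel₀ _ hx.ne', div_mul_cancel₀ _ hy.ne', cos_pi, abs_le] at hcheckerboard
    linarith [hcheckerboard.1]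
  · intro hcfl p
    rw [hGf]
    exact abs_one_sub_two_mul_sub_two_mul_le_one (by positivity) (by positivity) hcfl
      (one_sub_cos_mem_Icc _) (one_sub_cos_mem_Icc _)
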